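/- Let ξ₀, ξ₁ ∈ ℝ satisfy ξ₀ ≤ −1, ξ₁ ≤ −1 and (ξ₀+1)(ξ₁+1) > 1. Then there exists λ > 0 such that ξ₀ξ₁ + (ξ₀+ξ₁)·√λ·coth(√λ) + λ = 0. Moreover, at the point λ₀ with √λ₀ = −(ξ₀+ξ₁)/2 > 0 one has ξ₀ξ₁ + (ξ₀+ξ₁)·√λ₀·coth(√λ₀) + λ₀ < ξ₀ξ₁ − (ξ₀+ξ₁)²/4 = −(ξ₀−ξ₁)²/4 ≤ 0. -/

import Mathlib

/-! Since `s coth s ≤ 1 + s²`, for `ξ₀ + ξ₁ ≤ 0` the function `f` is bounded below by the affine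
function `(ξ₀ + 1)(ξ₁ + 1) - 1 + (ξ₀ + ξ₁ + 1) λ`, so `f > 0` near `0`. Since `coth > 1`, at
`√λ₀ = -(ξ₀ + ξ₁)/2` the term `(ξ₀ + ξ₁) √λ₀ coth √λ₀` is below `-(ξ₀ + ξ₁)²/2`, which gives
`f(λ₀) < ξ₀ξ₁ - (ξ₀ + ξ₁)²/4 ≤ 0`. The intermediate value theorem on `(0, λ₀]` yields the zero. -/

noncomputable def coth (s : ℝ) : ℝ := Real.cosh s / Real.sinh s

open Real Set Filter Topology

lemma one_lt_coth {s : ℝ} (hs : 0 < s) : 1 < coth s :=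
  (one_lt_div (sinh_pos_iff.2 hs)).2 (sinh_lt_cosh s)

-- `(1 + s²) sinh s - s cosh s` vanishes at `0` and has derivative `s sinh s + s² cosh s ≥ 0`.
lemma mul_cosh_le_one_add_sq_mul_sinh {s : ℝ} (hs : 0 ≤ s) :
    s * cosh s ≤ (1 + s ^ 2) * sinh s := by
  let g : ℝ → ℝ := fun x => (1 + x ^ 2) * sinh x - x * cosh x
  have hg : ∀ x, HasDerivAt g (x * sinh x + x ^ 2 * cosh x) x := fun x => by
    refine ((((hasDerivAt_pow 2 x).const_add 1).mul (hasDerivAt_sinh x)).sub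
      ((hasDerivAt_id x).mul (hasDerivAt_cosh x))).congr_deriv ?_
    simp only [id]; ring
  have hdiff : Differentiable ℝ g := fun x => (hg x).differentiableAt
  have hmono : MonotoneOn g (Ici 0) :=
    monotoneOn_of_deriv_nonneg (convex_Ici 0) hdiff.continuous.continuousOn
      hdiff.differentiableOn fun x hx => by
        rw [interior_Ici] at hx
        rw [(hg x).deriv]
        exact add_nonneg (mul_nonneg hx.out.le (sinh_nonneg_iff.2 hx.out.le))
          (mul_nonneg (sq_nonneg x) (cosh_pos x).le)
  simpa [g] using hmono self_mem_Ici hs hs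

lemma mul_coth_le_one_add_sq {s : ℝ} (hs : 0 ≤ s) : s * coth s ≤ 1 + s ^ 2 := by
  rcases hs.eq_or_lt with rfl | hs
  · simp [coth]
  rw [coth, ← mul_div_assoc, div_le_iff₀ (sinh_pos_iff.2 hs)]
  exact mul_cosh_le_one_add_sq_mul_sinh hs.le

lemma continuousOn_coth : ContinuousOn coth {0}ᶜ :=
  continuous_cosh.continuousOn.div continuous_sinh.continuousOn fun _ hs => sinh_ne_zero.2 hs

-- `robinDet ξ₀ ξ₁` is the function `f` of the statement.
noncomputable def robinDet (ξ₀ ξ₁ l : ℝ) : ℝ := ξ₀ * ξ₁ + (ξ₀ + ξ₁) * √l * coth √l + l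

section robinDet

variable {ξ₀ ξ₁ : ℝ}

lemma continuousOn_robinDet : ContinuousOn (robinDet ξ₀ ξ₁) (Ioi 0) := by
  have hcoth : ContinuousOn (fun l => coth √l) (Ioi 0) :=
    continuousOn_coth.comp continuous_sqrt.continuousOn fun l hl =>
      (sqrt_pos.2 hl).ne'
  unfold robinDet
  fun_prop

lemma le_robinDet (hS : ξ₀ + ξ₁ ≤ 0) {l : ℝ} (hl : 0 ≤ l) :
    ξ₀ * ξ₁ + (ξ₀ + ξ₁) * (1 + l) + l ≤ robinDet ξ₀ ξ₁ l := by
  have hbound := mul_coth_le_one_add_sq (sqrt_nonneg l)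
  rw [sq_sqrt hl] at hbound
  rw [robinDet, mul_assoc (ξ₀ + ξ₁)]
  linarith [mul_le_mul_of_nonpos_left hbound hS]

lemma eventually_pos_robinDet (hS : ξ₀ + ξ₁ ≤ 0) (hprod : 1 < (ξ₀ + 1) * (ξ₁ + 1)) :
    ∀ᶠ l in 𝓝[>] 0, 0 < robinDet ξ₀ ξ₁ l := by
  have hcont : Continuous fun l : ℝ => ξ₀ * ξ₁ + (ξ₀ + ξ₁) * (1 + l) + l := by fun_prop
  have hlower : ∀ᶠ l in 𝓝 0, 0 < ξ₀ * ξ₁ + (ξ₀ + ξ₁) * (1 + l) + l :=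
    (hcont.tendsto 0).eventually_const_lt (by norm_num; linarith)
  filter_upwards [nhdsWithin_le_nhds hlower, self_mem_nhdsWithin] with l hpos hl
  exact hpos.trans_le (le_robinDet hS hl.out.le)

lemma robinDet_half_sum_sq_lt (hS : ξ₀ + ξ₁ < 0) :
    robinDet ξ₀ ξ₁ ((-(ξ₀ + ξ₁) / 2) ^ 2) < ξ₀ * ξ₁ - (ξ₀ + ξ₁) ^ 2 / 4 := by
  have hs : 0 < -(ξ₀ + ξ₁) / 2 := by linarith
  have hcoth := mul_lt_mul_of_neg_left (one_lt_coth hs)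
    (mul_neg_of_neg_of_pos hS hs)
  rw [robinDet, sqrt_sq hs.le]
  linarith

lemma exists_robinDet_eq_zero (hS : ξ₀ + ξ₁ ≤ 0) (hprod : 1 < (ξ₀ + 1) * (ξ₁ + 1))
    {b : ℝ} (hb : 0 < b) (hfb : robinDet ξ₀ ξ₁ b ≤ 0) :
    ∃ l ∈ Ioc 0 b, robinDet ξ₀ ξ₁ l = 0 := by
  obtain ⟨a, hfa, ha⟩ :=
    ((eventually_pos_robinDet hS hprod).and (Ioo_mem_nhdsGT hb)).exists
  obtain ⟨l, hl, hfl⟩ := intermediate_value_Icc' ha.2.le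
    (continuousOn_robinDet.mono fun x hx => ha.1.trans_le hx.1) ⟨hfb, hfa.le⟩
  exact ⟨l, ⟨ha.1.trans_le hl.1, hl.2⟩, hfl⟩

end robinDet

/-- If `ξ₀ ≤ -1`, `ξ₁ ≤ -1` and `(ξ₀+1)(ξ₁+1) > 1`, then the eigenvalue determinant
function `f(λ) = ξ₀ξ₁ + (ξ₀+ξ₁)·√λ·coth(√λ) + λ` has a zero at some `λ > 0`; moreover,
at the point `λ₀` with `√λ₀ = −(ξ₀+ξ₁)/2 > 0` one has
`f(λ₀) < ξ₀ξ₁ − (ξ₀+ξ₁)²/4 = −(ξ₀−ξ₁)²/4 ≤ 0`. -/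
theorem stmt2 (ξ₀ ξ₁ : ℝ) (h₀ : ξ₀ ≤ -1) (h₁ : ξ₁ ≤ -1)
    (hprod : (ξ₀ + 1) * (ξ₁ + 1) > 1) :
    (∃ l : ℝ, l > 0 ∧
        ξ₀ * ξ₁ + (ξ₀ + ξ₁) * Real.sqrt l * coth (Real.sqrt l) + l = 0)
    ∧ (0 < -(ξ₀ + ξ₁) / 2)
    ∧ (ξ₀ * ξ₁ + (ξ₀ + ξ₁) * Real.sqrt ((-(ξ₀ + ξ₁) / 2) ^ 2)
            * coth (Real.sqrt ((-(ξ₀ + ξ₁) / 2) ^ 2)) + (-(ξ₀ + ξ₁) / 2) ^ 2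
          < ξ₀ * ξ₁ - (ξ₀ + ξ₁) ^ 2 / 4)
    ∧ ξ₀ * ξ₁ - (ξ₀ + ξ₁) ^ 2 / 4 = -(ξ₀ - ξ₁) ^ 2 / 4
    ∧ -(ξ₀ - ξ₁) ^ 2 / 4 ≤ 0 := by
  have hS : ξ₀ + ξ₁ < 0 := by linarith
  have hlt := robinDet_half_sum_sq_lt hS
  have hdisc : ξ₀ * ξ₁ - (ξ₀ + ξ₁) ^ 2 / 4 = -(ξ₀ - ξ₁) ^ 2 / 4 := by ring
  have hnonpos : -(ξ₀ - ξ₁) ^ 2 / 4 ≤ 0 := by linarith [sq_nonneg (ξ₀ - ξ₁)]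
  obtain ⟨l, hl, hfl⟩ :=
    exists_robinDet_eq_zero (b := (-(ξ₀ + ξ₁) / 2) ^ 2) hS.le hprod (pow_pos (by linarith) 2)
      (by linarith)
  exact ⟨⟨l, hl.1, hfl⟩, by linarith, hlt, hdisc, hnonpos⟩
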